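/- arXiv:0905.1059 — 7 statements merged into one kernel-verified Lean document; each statement's English description precedes it below -/
import Mathlib

section
/- A linear code C ⊆ GF(4)^n is self-orthogonal with respect to the Hermitian form (i.e., Σ x_i y_i² = 0 for all x, y ∈ C) if and only if every codeword of C has even Hamming weight. (Requires the characterization that a GF(4)-linear code with all weights even is Hermitian self-orthogonal, using linearity over GF(4).) -/
open Finset

private lemma gf4_key (F : Type*) [Field F] [Fintype F] [DecidableEq F]
    (hF : Fintype.card F = 4) {n : ℕ} (x : Fin n → F) :
    ∑ i, x i * (x i) ^ 2 = ((univ.filter (fun i => x i ≠ 0)).card : F) := by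
  rw [← Finset.sum_boole]
  refine Finset.sum_congr rfl fun i _ => ?_
  by_cases h : x i = 0
  · simp [h]
  · have h3 : x i ^ 3 = 1 := by
      have := FiniteField.pow_card_sub_one_eq_one (x i) h
      rwa [hF] at this
    rw [if_pos h]
    linear_combination h3

/-- A GF(4)-linear code `C ⊆ GF(4)^n` is Hermitian self-orthogonal
(`∑ xᵢ yᵢ² = 0` for all `x, y ∈ C`) iff every codeword has even Hamming weight. -/
theorem stmt1 (F : Type*) [Field F] [Fintype F] [DecidableEq F]
    (hF : Fintype.card F = 4) (n : ℕ) (C : Submodule F (Fin n → F)) :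
    (∀ x ∈ C, ∀ y ∈ C, ∑ i, x i * (y i) ^ 2 = 0) ↔
      ∀ x ∈ C, Even (univ.filter (fun i => x i ≠ 0)).card := by
  -- characteristic 2
  obtain ⟨m, hp, hc⟩ := FiniteField.card F (ringChar F)
  have hchar : ringChar F = 2 := by
    have hdvd : ringChar F ∣ 4 := hF ▸ hc ▸ dvd_pow_self _ m.ne_zero
    have : ringChar F ∣ 2 := hp.dvd_of_dvd_pow (show ringChar F ∣ 2 ^ 2 by norm_num [hdvd])
    exact (Nat.prime_dvd_prime_iff_eq hp Nat.prime_two).mp this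
  haveI : CharP F 2 := hchar ▸ ringChar.charP F
  have h2 : (2 : F) = 0 := by exact_mod_cast CharP.cast_eq_zero F 2
  have hiff : ∀ x : Fin n → F, (∑ i, x i * (x i) ^ 2 = 0 ↔
      Even (univ.filter (fun i => x i ≠ 0)).card) := by
    intro x
    rw [gf4_key F hF x, CharP.cast_eq_zero_iff F 2]
    exact even_iff_two_dvd.symm
  constructor
  · intro h x hx
    exact (hiff x).mp (h x hx x hx)
  · intro h x hx y hy
    have hS : ∀ z ∈ C, ∑ i, z i * (z i) ^ 2 = 0 := fun z hz => (hiff z).mpr (h z hz)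
    -- pick c ∉ {0,1}
    obtain ⟨c, hc0, hc1⟩ : ∃ c : F, c ≠ 0 ∧ c ≠ 1 := by
      by_contra hcon
      push_neg at hcon
      have hsub : (univ : Finset F) ⊆ {0, 1} := by
        intro a _
        simp only [Finset.mem_insert, Finset.mem_singleton]
        by_cases ha : a = 0
        · exact Or.inl ha
        · exact Or.inr (hcon a ha)
      have h4 := Finset.card_le_card hsub
      rw [Finset.card_univ, hF] at h4
      have h12 : ({0, 1} : Finset F).card ≤ 2 :=
        (Finset.card_insert_le 0 {1}).trans (by simp)
      omega
    set a := ∑ i, x i * (y i) ^ 2 with hadef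
    set b := ∑ i, y i * (x i) ^ 2 with hbdef
    have expand : ∀ u v : Fin n → F, u ∈ C → v ∈ C →
        (∑ i, u i * (v i) ^ 2) + (∑ i, v i * (u i) ^ 2) = 0 := by
      intro u v hu hv
      have h1 := hS (u + v) (C.add_mem hu hv)
      have h2' := hS u hu
      have h3' := hS v hv
      have key : ∑ i, (u + v) i * ((u + v) i) ^ 2 =
          (∑ i, u i * (u i) ^ 2) + (∑ i, v i * (v i) ^ 2) +
          ((∑ i, u i * (v i) ^ 2) + (∑ i, v i * (u i) ^ 2)) := by
        rw [← Finset.sum_add_distrib, ← Finset.sum_add_distrib, ← Finset.sum_add_distrib]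
        refine Finset.sum_congr rfl fun i _ => ?_
        simp only [Pi.add_apply]
        linear_combination ((u i) ^ 2 * v i + u i * (v i) ^ 2) * h2
      rw [key, h2', h3'] at h1
      linear_combination h1
    have e1 : a + b = 0 := expand x y hx hy
    have e2 : c * a + c ^ 2 * b = 0 := by
      have := expand (c • x) y (C.smul_mem c hx) hy
      have l1 : ∑ i, (c • x) i * (y i) ^ 2 = c * a := by
        rw [hadef, Finset.mul_sum]
        exact Finset.sum_congr rfl fun i _ => by simp [Pi.smul_apply, smul_eq_mul]; ring
      have l2 : ∑ i, y i * ((c • x) i) ^ 2 = c ^ 2 * b := by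
        rw [hbdef, Finset.mul_sum]
        exact Finset.sum_congr rfl fun i _ => by simp [Pi.smul_apply, smul_eq_mul]; ring
      rw [l1, l2] at this
      exact this
    have hb : b = a := by linear_combination e1 - a * h2 -- b = -a = a; check
    have : a * (c + c ^ 2) = 0 := by
      rw [hb] at e2
      linear_combination e2
    rcases mul_eq_zero.mp this with h | h
    · exact h
    · exfalso
      have : c * (1 + c) = 0 := by linear_combination h
      rcases mul_eq_zero.mp this with h' | h'
      · exact hc0 h'
      · exact hc1 (by linear_combination h' - h2)
end

section
/- Let S be a GF(2)-subspace of codimension 2 in GF(4)^m (as a GF(2)-space of dimension 2m) which is not a GF(4)-subspace. Then K = S ∩ ωS has GF(2)-codimension 4 in GF(4)^m, and S is the union of exactly four cosets of K (including K itself). Moreover, each of the three nontrivial cosets of K in S, together with K, spans points lying in one of three distinct GF(4)-hyperplanes containing K. -/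
theorem gf4_facts (F : Type*) [Field F] [Fintype F] (hF : Fintype.card F = 4)
    (ω : F) (hω : ω ^ 2 = ω + 1) :
    (2:F) = 0 ∧ ω ≠ 0 ∧ (∀ c : F, c = 0 ∨ c = 1 ∨ c = ω ∨ c = ω + 1) := by
  classical
  haveI : CharP F (ringChar F) := ringChar.charP F
  obtain ⟨n, hp, hcard⟩ := FiniteField.card F (ringChar F)
  have h4 : ringChar F ∣ 2^2 := by
    rw [show (2:ℕ)^2 = 4 from rfl, ← hF, hcard]
    exact dvd_pow_self _ (by positivity)
  have hp2 : ringChar F = 2 :=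
    (Nat.prime_dvd_prime_iff_eq hp Nat.prime_two).mp (hp.dvd_of_dvd_pow h4)
  have h2 : (2:F) = 0 := by
    have := CharP.cast_eq_zero F (ringChar F)
    rwa [hp2] at this
  have hω0 : ω ≠ 0 := by rintro rfl; simp at hω
  have hω1 : ω ≠ 1 := by rintro rfl; exact one_ne_zero (α := F) (by linear_combination -hω)
  refine ⟨h2, hω0, ?_⟩
  have hd : ({0,1,ω,ω+1} : Finset F) = Finset.univ := by
    apply Finset.eq_univ_of_card
    rw [hF]
    rw [Finset.card_insert_of_notMem, Finset.card_insert_of_notMem, Finset.card_insert_of_notMem]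
    · rfl
    · simp
    · simp only [Finset.mem_insert, Finset.mem_singleton]
      push_neg
      refine ⟨hω1.symm, fun h => hω0 (by linear_combination -h)⟩
    · simp only [Finset.mem_insert, Finset.mem_singleton]
      push_neg
      refine ⟨zero_ne_one, hω0.symm, fun h => hω1 (by linear_combination -h - h2)⟩
  intro c
  have : c ∈ ({0,1,ω,ω+1} : Finset F) := hd ▸ Finset.mem_univ c
  simpa using this

/-- Let `S` be a GF(2)-subspace (additive subgroup) of codimension 2 in `GF(4)^m` which is
not a GF(4)-subspace. Then `K = S ∩ ωS` has GF(2)-codimension 4, `S` is the union of exactly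
four cosets of `K` (including `K` itself), and the three nontrivial cosets of `K` in `S`,
together with `K`, lie in three distinct GF(4)-hyperplanes containing `K`. -/
theorem stmt8 (F : Type*) [Field F] [Fintype F] (hF : Fintype.card F = 4)
    (ω : F) (hω : ω ^ 2 = ω + 1) (m : ℕ)
    (S : AddSubgroup (Fin m → F)) (hS : S.index = 4)
    (hnot : ¬ ∀ v ∈ S, (fun i => ω * v i) ∈ S) :
    let K : Set (Fin m → F) := {v | v ∈ S ∧ ∃ w ∈ S, v = fun i => ω * w i}
    Nat.card K * 16 = Nat.card (Fin m → F) ∧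
    ∃ v₁ v₂ v₃ : Fin m → F, v₁ ∈ S ∧ v₂ ∈ S ∧ v₃ ∈ S ∧
      v₁ ∉ K ∧ v₂ ∉ K ∧ v₃ ∉ K ∧
      v₂ ∉ (v₁ + ·) '' K ∧ v₃ ∉ (v₁ + ·) '' K ∧ v₃ ∉ (v₂ + ·) '' K ∧
      (S : Set (Fin m → F)) = K ∪ (v₁ + ·) '' K ∪ (v₂ + ·) '' K ∪ (v₃ + ·) '' K ∧
      ∃ φ₁ φ₂ φ₃ : (Fin m → F) →ₗ[F] F, φ₁ ≠ 0 ∧ φ₂ ≠ 0 ∧ φ₃ ≠ 0 ∧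
        LinearMap.ker φ₁ ≠ LinearMap.ker φ₂ ∧
        LinearMap.ker φ₁ ≠ LinearMap.ker φ₃ ∧
        LinearMap.ker φ₂ ≠ LinearMap.ker φ₃ ∧
        K ⊆ (LinearMap.ker φ₁ : Set (Fin m → F)) ∧
        K ⊆ (LinearMap.ker φ₂ : Set (Fin m → F)) ∧
        K ⊆ (LinearMap.ker φ₃ : Set (Fin m → F)) ∧
        (v₁ + ·) '' K ⊆ (LinearMap.ker φ₁ : Set (Fin m → F)) ∧
        (v₂ + ·) '' K ⊆ (LinearMap.ker φ₂ : Set (Fin m → F)) ∧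
        (v₃ + ·) '' K ⊆ (LinearMap.ker φ₃ : Set (Fin m → F)) := by
  intro K
  classical
  obtain ⟨h2, hω0, hcases⟩ := gf4_facts F hF ω hω
  have hsq : ω * ω = ω + 1 := by rw [← sq]; exact hω
  have hcube : ω * ω * ω = 1 := by linear_combination ω * hω + hω + ω * h2
  -- vector facts
  have hvv : ∀ v : Fin m → F, v + v = 0 := by
    intro v; funext i
    simp only [Pi.add_apply, Pi.zero_apply]
    linear_combination (v i) * h2
  have hsmul3 : ∀ v : Fin m → F, ω • ω • ω • v = v := by
    intro v; rw [smul_smul, smul_smul, hcube, one_smul]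
  have hsmul2 : ∀ v : Fin m → F, ω • ω • v = ω • v + v := by
    intro v; rw [smul_smul, hsq, add_smul, one_smul]
  have hone : ∀ v : Fin m → F, ω • v + ω • ω • v = v := by
    intro v
    rw [hsmul2]
    calc ω • v + (ω • v + v) = ω • v + ω • v + v := by abel
    _ = v := by rw [hvv (ω • v), zero_add]
  set σ : (Fin m → F) →+ (Fin m → F) := AddMonoidHom.mk' (fun v => ω • v) (fun a b => smul_add ω a b) with hσ
  set T : AddSubgroup (Fin m → F) := S.map σ with hT
  have memT : ∀ x, x ∈ T ↔ ∃ w ∈ S, ω • w = x := by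
    intro x
    rw [hT, AddSubgroup.mem_map]
    rfl
  -- K is the subgroup S ⊓ T
  have hK : K = ((S ⊓ T : AddSubgroup (Fin m → F)) : Set (Fin m → F)) := by
    ext v
    constructor
    · rintro ⟨h1, w, hw, h3⟩
      exact ⟨h1, (memT v).mpr ⟨w, hw, h3.symm⟩⟩
    · rintro ⟨h1, h3⟩
      obtain ⟨w, hw, hww⟩ := (memT v).mp h3
      exact ⟨h1, w, hw, hww.symm⟩
  -- K is ω-stable
  have hKω : ∀ v, v ∈ S ⊓ T → ω • v ∈ S ⊓ T := by
    rintro v ⟨h1, h3⟩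
    obtain ⟨w, hw, rfl⟩ := (memT v).mp h3
    refine ⟨?_, (memT _).mpr ⟨ω • w, h1, rfl⟩⟩
    rw [hsmul2]
    exact S.add_mem h1 hw
  -- K as a submodule
  let K' : Submodule F (Fin m → F) :=
    { carrier := ((S ⊓ T : AddSubgroup (Fin m → F)) : Set (Fin m → F))
      add_mem' := fun ha hb => (S ⊓ T).add_mem ha hb
      zero_mem' := (S ⊓ T).zero_mem
      smul_mem' := by
        intro c x hx
        rcases hcases c with rfl | rfl | rfl | rfl
        · rw [zero_smul]; exact (S ⊓ T).zero_mem
        · rw [one_smul]; exact hx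
        · exact hKω x hx
        · rw [add_smul, one_smul]
          exact AddSubgroup.add_mem _ (hKω x hx) hx }
  -- A = S ⊔ T is everything
  have hωA : ∀ y ∈ S ⊔ T, ω • y ∈ S ⊔ T := by
    intro y hy
    rw [AddSubgroup.mem_sup] at hy
    obtain ⟨s, hs, t, ht, rfl⟩ := hy
    obtain ⟨w, hw, rfl⟩ := (memT t).mp ht
    rw [smul_add, hsmul2]
    have h1 : ω • s ∈ S ⊔ T := le_sup_right (α := AddSubgroup _) ((memT _).mpr ⟨s, hs, rfl⟩)
    have h2' : ω • w ∈ S ⊔ T := le_sup_right (α := AddSubgroup _) ((memT _).mpr ⟨w, hw, rfl⟩)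
    have h3 : w ∈ S ⊔ T := le_sup_left (α := AddSubgroup _) hw
    exact AddSubgroup.add_mem _ h1 (AddSubgroup.add_mem _ h2' h3)
  have hAtop : S ⊔ T = ⊤ := by
    by_contra hA
    obtain ⟨x, hx⟩ : ∃ x, x ∉ S ⊔ T := by
      by_contra hh
      push_neg at hh
      exact hA (AddSubgroup.eq_top_iff' _ |>.mpr hh)
    have hx1 : ω • x ∉ S ⊔ T := by
      intro h
      exact hx (hone x ▸ AddSubgroup.add_mem _ h (hωA _ h))
    have hx2 : ω • ω • x ∉ S ⊔ T := by
      intro h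
      exact hx (hsmul3 x ▸ hωA _ h)
    -- four distinct cosets
    set Q := (Fin m → F) ⧸ (S ⊔ T) with hQ
    have hmk : ∀ a b : Fin m → F, (QuotientAddGroup.mk a : Q) = QuotientAddGroup.mk b ↔ a - b ∈ S ⊔ T :=
      fun a b => QuotientAddGroup.eq_iff_sub_mem
    have hsub' : ∀ a b : Fin m → F, a - b = a + b := by
      intro a b
      rw [sub_eq_add_neg, neg_eq_of_add_eq_zero_right (hvv b)]
    have hd1 : (QuotientAddGroup.mk x : Q) ≠ (0 : Q) := by
      rw [show (0 : Q) = QuotientAddGroup.mk 0 from rfl, Ne, hmk, sub_zero]; exact hx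
    have hd2 : (QuotientAddGroup.mk (ω • x) : Q) ≠ (0 : Q) := by
      rw [show (0 : Q) = QuotientAddGroup.mk 0 from rfl, Ne, hmk, sub_zero]; exact hx1
    have hd3 : (QuotientAddGroup.mk (ω • ω • x) : Q) ≠ (0 : Q) := by
      rw [show (0 : Q) = QuotientAddGroup.mk 0 from rfl, Ne, hmk, sub_zero]; exact hx2
    have hd4 : (QuotientAddGroup.mk x : Q) ≠ QuotientAddGroup.mk (ω • x) := by
      rw [Ne, hmk, hsub']
      intro h
      exact hx2 (by rwa [show x + ω • x = ω • ω • x by rw [hsmul2]; abel] at h)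
    have hd5 : (QuotientAddGroup.mk x : Q) ≠ QuotientAddGroup.mk (ω • ω • x) := by
      rw [Ne, hmk, hsub']
      intro h
      exact hx1 (by rwa [show x + ω • ω • x = ω • x by rw [hsmul2, ← add_assoc, add_comm x, add_assoc, hvv, add_zero]] at h)
    have hd6 : (QuotientAddGroup.mk (ω • x) : Q) ≠ QuotientAddGroup.mk (ω • ω • x) := by
      rw [Ne, hmk, hsub']
      intro h
      exact hx (by rwa [hone] at h)
    haveI : Finite Q := Quotient.finite _
    letI : Fintype Q := Fintype.ofFinite Q
    have hcard4 : 4 ≤ Nat.card Q := by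
      rw [Nat.card_eq_fintype_card]
      have : ({(0 : Q), QuotientAddGroup.mk x, QuotientAddGroup.mk (ω • x),
          QuotientAddGroup.mk (ω • ω • x)} : Finset Q).card = 4 := by
        rw [Finset.card_insert_of_notMem, Finset.card_insert_of_notMem,
          Finset.card_insert_of_notMem]
        · rfl
        · simp [hd6]
        · simp [hd4, hd5]
        · simp [hd1.symm, hd2.symm, hd3.symm]
      rw [← this]
      exact Finset.card_le_univ _
    have hidx : (S ⊔ T).index = 4 := by
      have hdvd : (S ⊔ T).index ∣ 4 := hS ▸ AddSubgroup.index_dvd_of_le le_sup_left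
      have hge : 4 ≤ (S ⊔ T).index := by rwa [AddSubgroup.index_eq_card]
      have hle4 : (S ⊔ T).index ≤ 4 := Nat.le_of_dvd (by norm_num) hdvd
      omega
    have hrel : S.relIndex (S ⊔ T) * (S ⊔ T).index = S.index :=
      AddSubgroup.relIndex_mul_index le_sup_left
    rw [hidx, hS] at hrel
    have hrel1 : S.relIndex (S ⊔ T) = 1 := by omega
    have hle : S ⊔ T ≤ S := AddSubgroup.relIndex_eq_one.mp hrel1
    apply hnot
    intro v hv
    have : ω • v ∈ T := (memT _).mpr ⟨v, hv, rfl⟩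
    exact hle (le_sup_right (α := AddSubgroup _) this)
  -- cardinalities
  have c1 : Nat.card ↥S * 4 = Nat.card (Fin m → F) := by
    have := S.card_mul_index
    rwa [hS] at this
  have hSpos : 0 < Nat.card ↥S := Nat.card_pos
  have hTS : Nat.card ↥T = Nat.card ↥S := by
    have hcoe : (T : Set (Fin m → F)) = (fun v => ω • v) '' (S : Set (Fin m → F)) := by
      rw [hT]; rfl
    have hinj : Function.Injective (fun v : Fin m → F => ω • v) :=
      smul_right_injective _ hω0
    have h : Nat.card ↥(T : Set (Fin m → F)) = Nat.card ↥(S : Set (Fin m → F)) := by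
      rw [Nat.card_coe_set_eq, Nat.card_coe_set_eq, hcoe,
        Set.ncard_image_of_injective _ hinj]
    exact h
  have hTidx : T.index = 4 := by
    have h := T.card_mul_index
    rw [hTS, ← c1] at h
    exact Nat.eq_of_mul_eq_mul_left hSpos h
  let f : (Fin m → F) →+ ((Fin m → F) ⧸ S) × ((Fin m → F) ⧸ T) :=
    (QuotientAddGroup.mk' S).prod (QuotientAddGroup.mk' T)
  have hfsurj : Function.Surjective f := by
    rintro ⟨a, b⟩
    obtain ⟨a, rfl⟩ := QuotientAddGroup.mk'_surjective S a
    obtain ⟨b, rfl⟩ := QuotientAddGroup.mk'_surjective T b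
    have hab : a - b ∈ S ⊔ T := hAtop ▸ AddSubgroup.mem_top _
    rw [AddSubgroup.mem_sup] at hab
    obtain ⟨s, hs, t, ht, hst⟩ := hab
    have ha : a = s + t + b := by
      have := sub_eq_iff_eq_add.mp hst.symm
      rw [this]
    subst ha
    refine ⟨s + t + b - s, Prod.ext ?_ ?_⟩
    · show ((s + t + b - s : Fin m → F) : (Fin m → F) ⧸ S) = ((s + t + b : Fin m → F) : (Fin m → F) ⧸ S)
      rw [QuotientAddGroup.eq_iff_sub_mem]
      have : s + t + b - s - (s + t + b) = -s := by abel
      rw [this]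
      exact S.neg_mem hs
    · show ((s + t + b - s : Fin m → F) : (Fin m → F) ⧸ T) = ((b : Fin m → F) : (Fin m → F) ⧸ T)
      rw [QuotientAddGroup.eq_iff_sub_mem]
      have : s + t + b - s - b = t := by abel
      rw [this]
      exact ht
  have hker : f.ker = S ⊓ T := by
    ext x
    show (QuotientAddGroup.mk' S x, QuotientAddGroup.mk' T x) = 0 ↔ _
    rw [Prod.mk_eq_zero, AddSubgroup.mem_inf, QuotientAddGroup.mk'_apply,
      QuotientAddGroup.mk'_apply, QuotientAddGroup.eq_zero_iff, QuotientAddGroup.eq_zero_iff]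
  have hKidx : (S ⊓ T).index = 16 := by
    rw [AddSubgroup.index_eq_card, ← hker,
      Nat.card_congr (QuotientAddGroup.quotientKerEquivOfSurjective f hfsurj).toEquiv,
      Nat.card_prod, ← AddSubgroup.index_eq_card, ← AddSubgroup.index_eq_card, hS, hTidx]
  have c4 : Nat.card ↥(S ⊓ T) * 16 = Nat.card (Fin m → F) := by
    have := (S ⊓ T).card_mul_index
    rwa [hKidx] at this
  have goal1 : Nat.card ↥K * 16 = Nat.card (Fin m → F) := by
    rw [hK]; exact c4
  refine ⟨goal1, ?_⟩
  haveI hne' : Nonempty ↥(S ⊓ T) := ⟨⟨0, (S ⊓ T).zero_mem⟩⟩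
  set n := Nat.card ↥(S ⊓ T) with hn
  have npos : 0 < n := Nat.card_pos
  have hcardS : Nat.card ↥S = 4 * n := by omega
  have hKmem : ∀ x, x ∈ K ↔ x ∈ S ⊓ T := by
    intro x; rw [hK]; exact Iff.rfl
  have hKS : ∀ x ∈ K, x ∈ S := fun x hx => ((hKmem x).mp hx).1
  have hKadd : ∀ a b, a ∈ K → b ∈ K → a + b ∈ K := fun a b ha hb =>
    (hKmem _).mpr ((S ⊓ T).add_mem ((hKmem a).mp ha) ((hKmem b).mp hb))
  have hKn : K.ncard = n := by
    rw [← Nat.card_coe_set_eq, hK]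
    rfl
  have hSn : (S : Set (Fin m → F)).ncard = 4 * n := by
    rw [← Nat.card_coe_set_eq]; exact hcardS
  have himg : ∀ v x : Fin m → F, x ∈ (v + ·) '' K ↔ v + x ∈ K := by
    intro v x
    constructor
    · rintro ⟨k, hk, rfl⟩
      show v + (v + k) ∈ K
      rwa [← add_assoc, hvv v, zero_add]
    · intro h
      exact ⟨v + x, h, by show v + (v + x) = x; rw [← add_assoc, hvv v, zero_add]⟩
  have himn : ∀ v : Fin m → F, ((v + ·) '' K).ncard = n := by
    intro v
    rw [Set.ncard_image_of_injective _ (add_right_injective v), hKn]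
  have himS : ∀ v, v ∈ S → ∀ x ∈ (v + ·) '' K, x ∈ S := by
    rintro v hv x ⟨k, hk, rfl⟩
    exact S.add_mem hv (hKS k hk)
  have hdiffK : ∀ a x : Fin m → F, a + x ∈ K → x ∈ K → a ∈ K := by
    intro a x h1 h2
    have h3 := hKadd _ _ h1 h2
    rwa [add_assoc, hvv x, add_zero] at h3
  obtain ⟨v₁, hv₁S, hv₁K⟩ : ∃ v, v ∈ (S : Set (Fin m → F)) ∧ v ∉ K := by
    by_contra h
    push_neg at h
    have := Set.ncard_le_ncard h (Set.toFinite _)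
    rw [hSn, hKn] at this
    omega
  obtain ⟨v₂, hv₂S, hv₂n⟩ : ∃ v, v ∈ (S : Set (Fin m → F)) ∧ v ∉ K ∪ (v₁ + ·) '' K := by
    by_contra h
    push_neg at h
    have h1 := Set.ncard_le_ncard h (Set.toFinite _)
    have h2 := Set.ncard_union_le K ((v₁ + ·) '' K)
    rw [hSn] at h1
    rw [hKn, himn v₁] at h2
    omega
  have hv₂K : v₂ ∉ K := fun h => hv₂n (Set.mem_union_left _ h)
  have hv₂i1 : v₂ ∉ (v₁ + ·) '' K := fun h => hv₂n (Set.mem_union_right _ h)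
  set v₃ := v₁ + v₂ with hv₃
  have hv₃S : v₃ ∈ (S : Set (Fin m → F)) := S.add_mem hv₁S hv₂S
  have hv₃K : v₃ ∉ K := fun h => hv₂i1 ((himg v₁ v₂).mpr h)
  have hv₁₃ : v₁ + v₃ = v₂ := by rw [hv₃, ← add_assoc, hvv v₁, zero_add]
  have hv₂₃ : v₂ + v₃ = v₁ := by
    rw [hv₃, show v₂ + (v₁ + v₂) = v₁ + (v₂ + v₂) by abel, hvv v₂, add_zero]
  have hv₃i1 : v₃ ∉ (v₁ + ·) '' K := by
    intro h
    have h1 := (himg v₁ v₃).mp h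
    rw [hv₁₃] at h1
    exact hv₂K h1
  have hv₃i2 : v₃ ∉ (v₂ + ·) '' K := by
    intro h
    have h1 := (himg v₂ v₃).mp h
    rw [hv₂₃] at h1
    exact hv₁K h1
  -- disjointness
  have hdjK : ∀ a : Fin m → F, a ∉ K → Disjoint K ((a + ·) '' K) := by
    intro a ha
    rw [Set.disjoint_left]
    intro x hx h1
    exact ha (hdiffK a x ((himg a x).mp h1) hx)
  have hdj2 : ∀ a b : Fin m → F, a + b ∉ K → Disjoint ((a + ·) '' K) ((b + ·) '' K) := by
    intro a b hab
    rw [Set.disjoint_left]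
    intro x h1 h2
    have h3 := hKadd _ _ ((himg a x).mp h1) ((himg b x).mp h2)
    rw [show a + x + (b + x) = a + b + (x + x) by abel, hvv x, add_zero] at h3
    exact hab h3
  have d1 : Disjoint K ((v₁ + ·) '' K) := hdjK v₁ hv₁K
  have d2 : Disjoint (K ∪ (v₁ + ·) '' K) ((v₂ + ·) '' K) :=
    Set.disjoint_union_left.mpr ⟨hdjK v₂ hv₂K, hdj2 v₁ v₂ hv₃K⟩
  have d3 : Disjoint (K ∪ (v₁ + ·) '' K ∪ (v₂ + ·) '' K) ((v₃ + ·) '' K) := by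
    refine Set.disjoint_union_left.mpr ⟨Set.disjoint_union_left.mpr ⟨hdjK v₃ hv₃K, ?_⟩, ?_⟩
    · exact hdj2 v₁ v₃ (hv₁₃ ▸ hv₂K)
    · exact hdj2 v₂ v₃ (hv₂₃ ▸ hv₁K)
  have hUsub : K ∪ (v₁ + ·) '' K ∪ (v₂ + ·) '' K ∪ (v₃ + ·) '' K ⊆ (S : Set (Fin m → F)) := by
    intro x hx
    rcases hx with ((hx | hx) | hx) | hx
    exacts [hKS x hx, himS v₁ hv₁S x hx, himS v₂ hv₂S x hx, himS v₃ hv₃S x hx]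
  have hUn : (K ∪ (v₁ + ·) '' K ∪ (v₂ + ·) '' K ∪ (v₃ + ·) '' K).ncard = 4 * n := by
    rw [Set.ncard_union_eq d3 (Set.toFinite _) (Set.toFinite _),
        Set.ncard_union_eq d2 (Set.toFinite _) (Set.toFinite _),
        Set.ncard_union_eq d1 (Set.toFinite _) (Set.toFinite _), hKn, himn, himn, himn]
    ring
  have hU : (S : Set (Fin m → F)) = K ∪ (v₁ + ·) '' K ∪ (v₂ + ·) '' K ∪ (v₃ + ·) '' K :=
    (Set.eq_of_subset_of_ncard_le hUsub (by rw [hUn, hSn]) (Set.toFinite _)).symm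
  -- hyperplanes
  have hcard4F : Nat.card F = 4 := by rw [Nat.card_eq_fintype_card, hF]
  have hcardK' : Nat.card ↥K' = n := rfl
  have hVcard : Nat.card (Fin m → F) = 16 * n := by omega
  have hcons : ∀ v : Fin m → F, v ∈ S → ∃ φ : (Fin m → F) →ₗ[F] F, φ ≠ 0 ∧
      (∀ x ∈ K, x ∈ LinearMap.ker φ) ∧ v ∈ LinearMap.ker φ := by
    intro v hv
    have hWne : K' ⊔ Submodule.span F {v} ≠ ⊤ := by
      intro htop
      have hsub : ((K' ⊔ Submodule.span F {v} : Submodule F (Fin m → F)) : Set (Fin m → F)) ⊆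
          (fun p : ↥K' × F => (p.1 : Fin m → F) + p.2 • v) '' Set.univ := by
        intro x hx
        rw [SetLike.mem_coe, Submodule.mem_sup] at hx
        obtain ⟨y, hy, z, hz, rfl⟩ := hx
        obtain ⟨c, rfl⟩ := Submodule.mem_span_singleton.mp hz
        exact ⟨⟨⟨y, hy⟩, c⟩, Set.mem_univ _, rfl⟩
      have h1 := Set.ncard_le_ncard hsub (Set.toFinite _)
      have h2 := Set.ncard_image_le (Set.toFinite (Set.univ : Set (↥K' × F)))
          (f := fun p : ↥K' × F => (p.1 : Fin m → F) + p.2 • v)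
      have h3 : (Set.univ : Set (↥K' × F)).ncard = n * 4 := by
        rw [Set.ncard_univ, Nat.card_prod, hcardK', hcard4F]
      rw [htop] at h1
      have h4 : ((⊤ : Submodule F (Fin m → F)) : Set (Fin m → F)).ncard = 16 * n := by
        rw [Submodule.top_coe, Set.ncard_univ, hVcard]
      rw [h4] at h1
      rw [h3] at h2
      have h5 := le_trans h1 h2
      omega
    obtain ⟨φ, hφ0, hφker⟩ :=
      (K' ⊔ Submodule.span F {v}).exists_le_ker_of_lt_top (lt_top_iff_ne_top.mpr hWne)
    refine ⟨φ, hφ0, fun x hx => hφker (Submodule.mem_sup_left ((hKmem x).mp hx)),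
      hφker (Submodule.mem_sup_right (Submodule.mem_span_singleton_self v))⟩
  obtain ⟨φ₁, hφ₁0, hφ₁K, hφ₁v⟩ := hcons v₁ hv₁S
  obtain ⟨φ₂, hφ₂0, hφ₂K, hφ₂v⟩ := hcons v₂ hv₂S
  obtain ⟨φ₃, hφ₃0, hφ₃K, hφ₃v⟩ := hcons v₃ hv₃S
  have hzero : ∀ ψ : (Fin m → F) →ₗ[F] F, (∀ x ∈ K, x ∈ LinearMap.ker ψ) →
      v₁ ∈ LinearMap.ker ψ → v₂ ∈ LinearMap.ker ψ → ψ = 0 := by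
    intro ψ hKψ h1 h2'
    rw [LinearMap.mem_ker] at h1 h2'
    have hSψ : ∀ s, s ∈ S → ψ s = 0 := by
      intro s hs
      have hs' : s ∈ (S : Set (Fin m → F)) := hs
      rw [hU] at hs'
      rcases hs' with ((h | h) | h) | h
      · have := hKψ s h
        rwa [LinearMap.mem_ker] at this
      · obtain ⟨k, hk, rfl⟩ := h
        have hk0 := hKψ k hk
        rw [LinearMap.mem_ker] at hk0
        rw [map_add, h1, hk0, add_zero]
      · obtain ⟨k, hk, rfl⟩ := h
        have hk0 := hKψ k hk
        rw [LinearMap.mem_ker] at hk0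
        rw [map_add, h2', hk0, add_zero]
      · obtain ⟨k, hk, rfl⟩ := h
        have hk0 := hKψ k hk
        rw [LinearMap.mem_ker] at hk0
        rw [map_add, hv₃, map_add, h1, h2', hk0]
        ring
    have hTψ : ∀ t, t ∈ T → ψ t = 0 := by
      intro t ht
      obtain ⟨w, hw, rfl⟩ := (memT t).mp ht
      rw [map_smul, hSψ w hw, smul_zero]
    apply LinearMap.ext
    intro x
    have hx : x ∈ S ⊔ T := hAtop ▸ AddSubgroup.mem_top x
    rw [AddSubgroup.mem_sup] at hx
    obtain ⟨s, hs, t, ht, rfl⟩ := hx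
    rw [map_add, hSψ s hs, hTψ t ht, add_zero]
    rfl
  have hne12 : LinearMap.ker φ₁ ≠ LinearMap.ker φ₂ := by
    intro h
    exact hφ₁0 (hzero φ₁ hφ₁K hφ₁v (h ▸ hφ₂v))
  have hne13 : LinearMap.ker φ₁ ≠ LinearMap.ker φ₃ := by
    intro h
    have h3 : v₃ ∈ LinearMap.ker φ₁ := h ▸ hφ₃v
    have h2' : v₂ ∈ LinearMap.ker φ₁ := by
      rw [← hv₁₃]; exact (LinearMap.ker φ₁).add_mem hφ₁v h3
    exact hφ₁0 (hzero φ₁ hφ₁K hφ₁v h2')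
  have hne23 : LinearMap.ker φ₂ ≠ LinearMap.ker φ₃ := by
    intro h
    have h3 : v₃ ∈ LinearMap.ker φ₂ := h ▸ hφ₃v
    have h1' : v₁ ∈ LinearMap.ker φ₂ := by
      rw [← hv₂₃]; exact (LinearMap.ker φ₂).add_mem hφ₂v h3
    exact hφ₂0 (hzero φ₂ hφ₂K h1' hφ₂v)
  refine ⟨v₁, v₂, v₃, hv₁S, hv₂S, hv₃S, hv₁K, hv₂K, hv₃K, hv₂i1, hv₃i1, hv₃i2, hU,
    φ₁, φ₂, φ₃, hφ₁0, hφ₂0, hφ₃0, hne12, hne13, hne23,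
    fun x hx => hφ₁K x hx, fun x hx => hφ₂K x hx, fun x hx => hφ₃K x hx, ?_, ?_, ?_⟩
  · rintro x ⟨k, hk, rfl⟩
    exact (LinearMap.ker φ₁).add_mem hφ₁v (hφ₁K k hk)
  · rintro x ⟨k, hk, rfl⟩
    exact (LinearMap.ker φ₂).add_mem hφ₂v (hφ₂K k hk)
  · rintro x ⟨k, hk, rfl⟩
    exact (LinearMap.ker φ₃).add_mem hφ₃v (hφ₃K k hk)
end

section
/- Consider the 20 points of PG(4,4) given by the columns of the 5×20 matrix over GF(4) = {0,1,ω,ω²} (writing 2 = ω, 3 = ω²): rows [0,1,0,0,0,0,0,0,1,1,0,1,0,0,0,1,1,1,0,1], [0,0,1,1,0,1,0,0,2,1,0,1,1,0,1,0,2,3,1,3], [1,0,0,0,1,3,0,0,2,1,1,2,1,1,1,3,1,0,3,3], [1,0,0,2,0,1,1,0,3,3,2,2,0,3,1,1,2,1,2,0], [2,0,0,1,0,2,0,1,0,3,1,1,2,3,1,2,2,1,0,3]. These 20 points form a cap in PG(4,4): no three of them are collinear. -/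
def mtab : Nat := 2625168384
def mul4 (x y : Nat) : Nat := (mtab >>> (2*(4*x+y))) &&& 3
def add4 (x y : Nat) : Nat := x ^^^ y
def CC : Nat := 1301205683189402858891716935593048636750151247156518607390288
def ent (i j : Nat) : Nat := (CC >>> (10*j + 2*i)) &&& 3

def psi (F : Type*) [Field F] (ω : F) (n : Nat) : F :=
  if n = 1 then 1 else if n = 2 then ω else if n = 3 then ω + 1 else 0

lemma ent_lt (i j : Nat) : ent i j < 4 := Nat.lt_succ_of_le (Nat.and_le_right)
lemma mul4_lt (x y : Nat) : mul4 x y < 4 := Nat.lt_succ_of_le (Nat.and_le_right)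
lemma add4_lt {x y : Nat} (hx : x < 4) (hy : y < 4) : add4 x y < 4 :=
  Nat.xor_lt_two_pow (n := 2) hx hy

lemma psi_mul (F : Type*) [Field F] (ω : F) (hω : ω ^ 2 = ω + 1) (h2 : (2 : F) = 0)
    {x y : Nat} (hx : x < 4) (hy : y < 4) :
    psi F ω (mul4 x y) = psi F ω x * psi F ω y := by
  interval_cases x <;> interval_cases y <;>
    simp only [show mul4 0 0 = 0 from by decide, show mul4 0 1 = 0 from by decide, show mul4 0 2 = 0 from by decide, show mul4 0 3 = 0 from by decide, show mul4 1 0 = 0 from by decide, show mul4 1 1 = 1 from by decide, show mul4 1 2 = 2 from by decide, show mul4 1 3 = 3 from by decide, show mul4 2 0 = 0 from by decide, show mul4 2 1 = 2 from by decide, show mul4 2 2 = 3 from by decide, show mul4 2 3 = 1 from by decide, show mul4 3 0 = 0 from by decide, show mul4 3 1 = 3 from by decide, show mul4 3 2 = 1 from by decide, show mul4 3 3 = 2 from by decide, psi] <;> (try norm_num) <;>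
    first
      | rfl
      | ring1
      | linear_combination hω
      | linear_combination -hω
      | linear_combination h2
      | linear_combination -h2
      | linear_combination ω * h2
      | linear_combination -ω * h2
      | linear_combination hω + h2
      | linear_combination hω - h2
      | linear_combination -hω + h2
      | linear_combination -hω - h2
      | linear_combination hω + ω * h2
      | linear_combination hω - ω * h2
      | linear_combination -hω + ω * h2
      | linear_combination -hω - ω * h2
      | linear_combination (ω+1) * h2
      | linear_combination -(ω+1) * h2
      | linear_combination hω + (ω+1) * h2
      | linear_combination -hω + (ω+1) * h2
      | linear_combination hω - (ω+1) * h2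
      | linear_combination -hω - (ω+1) * h2
      | linear_combination h2 + ω * h2
      | linear_combination -h2 - ω * h2

lemma psi_add (F : Type*) [Field F] (ω : F) (hω : ω ^ 2 = ω + 1) (h2 : (2 : F) = 0)
    {x y : Nat} (hx : x < 4) (hy : y < 4) :
    psi F ω (add4 x y) = psi F ω x + psi F ω y := by
  interval_cases x <;> interval_cases y <;>
    simp only [show add4 0 0 = 0 from by decide, show add4 0 1 = 1 from by decide, show add4 0 2 = 2 from by decide, show add4 0 3 = 3 from by decide, show add4 1 0 = 1 from by decide, show add4 1 1 = 0 from by decide, show add4 1 2 = 3 from by decide, show add4 1 3 = 2 from by decide, show add4 2 0 = 2 from by decide, show add4 2 1 = 3 from by decide, show add4 2 2 = 0 from by decide, show add4 2 3 = 1 from by decide, show add4 3 0 = 3 from by decide, show add4 3 1 = 2 from by decide, show add4 3 2 = 1 from by decide, show add4 3 3 = 0 from by decide, psi] <;> (try norm_num) <;>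
    first
      | rfl
      | ring1
      | linear_combination hω
      | linear_combination -hω
      | linear_combination h2
      | linear_combination -h2
      | linear_combination ω * h2
      | linear_combination -ω * h2
      | linear_combination hω + h2
      | linear_combination hω - h2
      | linear_combination -hω + h2
      | linear_combination -hω - h2
      | linear_combination hω + ω * h2
      | linear_combination hω - ω * h2
      | linear_combination -hω + ω * h2
      | linear_combination -hω - ω * h2
      | linear_combination (ω+1) * h2
      | linear_combination -(ω+1) * h2
      | linear_combination hω + (ω+1) * h2
      | linear_combination -hω + (ω+1) * h2
      | linear_combination hω - (ω+1) * h2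
      | linear_combination -hω - (ω+1) * h2
      | linear_combination h2 + ω * h2
      | linear_combination -h2 - ω * h2

lemma psi_ne (F : Type*) [Field F] (ω : F) (hω : ω ^ 2 = ω + 1) (h2 : (2 : F) = 0)
    {x : Nat} (hx : x < 4) (h0 : x ≠ 0) : psi F ω x ≠ 0 := by
  have hω0 : ω ≠ 0 := by
    intro h
    rw [h] at hω
    norm_num at hω
  have hω1 : ω + 1 ≠ 0 := by
    intro h
    have h1 : ω = 1 := by linear_combination h - h2
    rw [h1] at hω
    norm_num at hω
    exact one_ne_zero (hω.trans h2)
  interval_cases x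
  · exact absurd rfl h0
  · simpa [psi] using one_ne_zero
  · simpa [psi] using hω0
  · simpa [psi] using hω1


def detN (j₁ j₂ j₃ r₁ r₂ r₃ : Nat) : Nat :=
  add4 (mul4 (ent r₁ j₁) (mul4 (ent r₂ j₂) (ent r₃ j₃)))
  (add4 (mul4 (ent r₂ j₁) (mul4 (ent r₃ j₂) (ent r₁ j₃)))
  (add4 (mul4 (ent r₃ j₁) (mul4 (ent r₁ j₂) (ent r₂ j₃)))
  (add4 (mul4 (ent r₃ j₁) (mul4 (ent r₂ j₂) (ent r₁ j₃)))
  (add4 (mul4 (ent r₂ j₁) (mul4 (ent r₁ j₂) (ent r₃ j₃)))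
        (mul4 (ent r₁ j₁) (mul4 (ent r₃ j₂) (ent r₂ j₃)))))))

def combos : List (Nat × Nat × Nat) :=
  [(0,1,2),(0,1,3),(0,1,4),(0,2,3),(0,2,4),(0,3,4),(1,2,3),(1,2,4),(1,3,4),(2,3,4)]

def tripOK (j₁ j₂ j₃ : Nat) : Bool :=
  combos.any fun r => detN j₁ j₂ j₃ r.1 r.2.1 r.2.2 != 0

def check : Bool :=
  (List.range 20).all fun j₁ => (List.range 20).all fun j₂ => (List.range 20).all fun j₃ =>
    (j₁ == j₂ || j₁ == j₃ || j₂ == j₃) || tripOK j₁ j₂ j₃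

set_option maxRecDepth 100000 in
set_option maxHeartbeats 8000000 in
theorem key : check = true := by decide

set_option maxHeartbeats 2000000 in
lemma entry (F : Type*) [Field F] (ω : F) (hω : ω ^ 2 = ω + 1) (i : Fin 5) (j : Fin 20) :
    (!![0, 1, 0, 0, 0, 0, 0, 0, 1, 1, 0, 1, 0, 0, 0, 1, 1, 1, 0, 1;
        0, 0, 1, 1, 0, 1, 0, 0, ω, 1, 0, 1, 1, 0, 1, 0, ω, ω^2, 1, ω^2;
        1, 0, 0, 0, 1, ω^2, 0, 0, ω, 1, 1, ω, 1, 1, 1, ω^2, 1, 0, ω^2, ω^2;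
        1, 0, 0, ω, 0, 1, 1, 0, ω^2, ω^2, ω, ω, 0, ω^2, 1, 1, ω, 1, ω, 0;
        ω, 0, 0, 1, 0, ω, 0, 1, 0, ω^2, 1, 1, ω, ω^2, 1, ω, ω, 1, 0, ω^2] :
      Matrix (Fin 5) (Fin 20) F) i j = psi F ω (ent i.val j.val) := by
  fin_cases i <;> fin_cases j <;> first | rfl | (rw [hω]; rfl)

/-- The 20 columns of the given 5×20 matrix over `GF(4) = {0,1,ω,ω²}` form a cap in
`PG(4,4)`: no three of them are collinear, i.e. any three columns with distinct indices
are linearly independent over `GF(4)`. -/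
theorem stmt13 (F : Type*) [Field F] [Fintype F] (hF : Fintype.card F = 4)
    (ω : F) (hω : ω ^ 2 = ω + 1) :
    let M : Matrix (Fin 5) (Fin 20) F :=
      !![0, 1, 0, 0, 0, 0, 0, 0, 1, 1, 0, 1, 0, 0, 0, 1, 1, 1, 0, 1;
         0, 0, 1, 1, 0, 1, 0, 0, ω, 1, 0, 1, 1, 0, 1, 0, ω, ω^2, 1, ω^2;
         1, 0, 0, 0, 1, ω^2, 0, 0, ω, 1, 1, ω, 1, 1, 1, ω^2, 1, 0, ω^2, ω^2;
         1, 0, 0, ω, 0, 1, 1, 0, ω^2, ω^2, ω, ω, 0, ω^2, 1, 1, ω, 1, ω, 0;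
         ω, 0, 0, 1, 0, ω, 0, 1, 0, ω^2, 1, 1, ω, ω^2, 1, ω, ω, 1, 0, ω^2]
    ∀ j₁ j₂ j₃ : Fin 20, j₁ ≠ j₂ → j₁ ≠ j₃ → j₂ ≠ j₃ →
      LinearIndependent F ![fun i => M i j₁, fun i => M i j₂, fun i => M i j₃] := by
  intro M j₁ j₂ j₃ h12 h13 h23
  have h4 : (4 : F) = 0 := by
    have h := FiniteField.cast_card_eq_zero F
    rw [hF] at h
    exact_mod_cast h
  have h2 : (2 : F) = 0 := by
    have h : (2 : F) * 2 = 0 := by linear_combination h4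
    rcases mul_eq_zero.mp h with h | h <;> exact h
  have hc : tripOK j₁.val j₂.val j₃.val = true := by
    have hk := key
    unfold check at hk
    rw [List.all_eq_true] at hk
    have h1 := hk j₁.val (List.mem_range.mpr j₁.isLt)
    rw [List.all_eq_true] at h1
    have hb := h1 j₂.val (List.mem_range.mpr j₂.isLt)
    rw [List.all_eq_true] at hb
    have hd := hb j₃.val (List.mem_range.mpr j₃.isLt)
    simp only [Bool.or_eq_true, beq_iff_eq] at hd
    rcases hd with ((h | h) | h) | h
    · exact absurd (Fin.val_injective h) h12
    · exact absurd (Fin.val_injective h) h13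
    · exact absurd (Fin.val_injective h) h23
    · exact h
  rw [tripOK, List.any_eq_true] at hc
  obtain ⟨r, hmem, hdet⟩ := hc
  rw [bne_iff_ne] at hdet
  have hr : r.1 < 5 ∧ r.2.1 < 5 ∧ r.2.2 < 5 := by
    fin_cases hmem <;> exact ⟨by norm_num, by norm_num, by norm_num⟩
  set R1 : Fin 5 := ⟨r.1, hr.1⟩ with hR1
  set R2 : Fin 5 := ⟨r.2.1, hr.2.1⟩ with hR2
  set R3 : Fin 5 := ⟨r.2.2, hr.2.2⟩ with hR3
  set A : Matrix (Fin 3) (Fin 3) F :=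
    !![M R1 j₁, M R2 j₁, M R3 j₁;
       M R1 j₂, M R2 j₂, M R3 j₂;
       M R1 j₃, M R2 j₃, M R3 j₃] with hAdef
  have hsub : ∀ a b : F, a - b = a + b := fun a b => by linear_combination -b * h2
  have hAdet : A.det = psi F ω (detN j₁.val j₂.val j₃.val r.1 r.2.1 r.2.2) := by
    rw [hAdef, Matrix.det_fin_three]
    simp only [Matrix.cons_val', Matrix.cons_val_zero, Matrix.cons_val_one, Matrix.head_cons,
      Matrix.cons_val_two, Matrix.tail_cons, Matrix.head_fin_const, Matrix.empty_val',
      Matrix.cons_val_fin_one, Matrix.of_apply]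
    rw [show M R1 j₁ = psi F ω (ent r.1 j₁.val) from entry F ω hω R1 j₁]
    rw [show M R2 j₁ = psi F ω (ent r.2.1 j₁.val) from entry F ω hω R2 j₁]
    rw [show M R3 j₁ = psi F ω (ent r.2.2 j₁.val) from entry F ω hω R3 j₁]
    rw [show M R1 j₂ = psi F ω (ent r.1 j₂.val) from entry F ω hω R1 j₂]
    rw [show M R2 j₂ = psi F ω (ent r.2.1 j₂.val) from entry F ω hω R2 j₂]
    rw [show M R3 j₂ = psi F ω (ent r.2.2 j₂.val) from entry F ω hω R3 j₂]
    rw [show M R1 j₃ = psi F ω (ent r.1 j₃.val) from entry F ω hω R1 j₃]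
    rw [show M R2 j₃ = psi F ω (ent r.2.1 j₃.val) from entry F ω hω R2 j₃]
    rw [show M R3 j₃ = psi F ω (ent r.2.2 j₃.val) from entry F ω hω R3 j₃]
    unfold detN
    rw [psi_add F ω hω h2 (mul4_lt _ _) (add4_lt (mul4_lt _ _) (add4_lt (mul4_lt _ _)
      (add4_lt (mul4_lt _ _) (add4_lt (mul4_lt _ _) (mul4_lt _ _)))))]
    rw [psi_add F ω hω h2 (mul4_lt _ _) (add4_lt (mul4_lt _ _)
      (add4_lt (mul4_lt _ _) (add4_lt (mul4_lt _ _) (mul4_lt _ _))))]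
    rw [psi_add F ω hω h2 (mul4_lt _ _)
      (add4_lt (mul4_lt _ _) (add4_lt (mul4_lt _ _) (mul4_lt _ _)))]
    rw [psi_add F ω hω h2 (mul4_lt _ _) (add4_lt (mul4_lt _ _) (mul4_lt _ _))]
    rw [psi_add F ω hω h2 (mul4_lt _ _) (mul4_lt _ _)]
    rw [psi_mul F ω hω h2 (ent_lt _ _) (mul4_lt _ _),
        psi_mul F ω hω h2 (ent_lt _ _) (mul4_lt _ _),
        psi_mul F ω hω h2 (ent_lt _ _) (mul4_lt _ _),
        psi_mul F ω hω h2 (ent_lt _ _) (mul4_lt _ _),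
        psi_mul F ω hω h2 (ent_lt _ _) (mul4_lt _ _),
        psi_mul F ω hω h2 (ent_lt _ _) (mul4_lt _ _)]
    rw [psi_mul F ω hω h2 (ent_lt _ _) (ent_lt _ _),
        psi_mul F ω hω h2 (ent_lt _ _) (ent_lt _ _),
        psi_mul F ω hω h2 (ent_lt _ _) (ent_lt _ _),
        psi_mul F ω hω h2 (ent_lt _ _) (ent_lt _ _),
        psi_mul F ω hω h2 (ent_lt _ _) (ent_lt _ _),
        psi_mul F ω hω h2 (ent_lt _ _) (ent_lt _ _)]
    simp only [hsub]
    ring1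
  have hdet4 : detN j₁.val j₂.val j₃.val r.1 r.2.1 r.2.2 < 4 := by
    unfold detN
    exact add4_lt (mul4_lt _ _) (add4_lt (mul4_lt _ _) (add4_lt (mul4_lt _ _)
      (add4_lt (mul4_lt _ _) (add4_lt (mul4_lt _ _) (mul4_lt _ _)))))
  have hA : A.det ≠ 0 := by
    rw [hAdet]
    exact psi_ne F ω hω h2 hdet4 hdet
  have hu : IsUnit A := (Matrix.isUnit_iff_isUnit_det A).mpr (isUnit_iff_ne_zero.mpr hA)
  have hli : LinearIndependent F (fun k => A k) :=
    Matrix.linearIndependent_rows_iff_isUnit.mpr hu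
  have hcomp : (fun k => A k) = (LinearMap.funLeft F F ![R1, R2, R3]) ∘
      ![fun i => M i j₁, fun i => M i j₂, fun i => M i j₃] := by
    funext k l
    fin_cases k <;> fin_cases l <;> rfl
  exact LinearIndependent.of_comp (LinearMap.funLeft F F ![R1, R2, R3]) (hcomp ▸ hli)
end

section
/- For the [20,5] linear code over GF(4) generated by the matrix whose columns are the 20 cap points above, every nonzero codeword has even Hamming weight; equivalently, every hyperplane of PG(4,4) meets the 20-point cap in an even number of points. -/
open Finset
open scoped Classical

set_option maxRecDepth 16000 in
set_option maxHeartbeats 4000000 in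
/-- Every nonzero codeword of the `[20,5]` code over `GF(4)` generated by the matrix whose
columns are the 20 cap points has even Hamming weight (equivalently, every hyperplane of
`PG(4,4)` meets the 20-point cap in an even number of points). -/
theorem stmt14 (F : Type*) [Field F] [Fintype F] (hF : Fintype.card F = 4)
    (ω : F) (hω : ω ^ 2 = ω + 1) :
    let M : Matrix (Fin 5) (Fin 20) F :=
      !![0, 1, 0, 0, 0, 0, 0, 0, 1, 1, 0, 1, 0, 0, 0, 1, 1, 1, 0, 1;
         0, 0, 1, 1, 0, 1, 0, 0, ω, 1, 0, 1, 1, 0, 1, 0, ω, ω^2, 1, ω^2;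
         1, 0, 0, 0, 1, ω^2, 0, 0, ω, 1, 1, ω, 1, 1, 1, ω^2, 1, 0, ω^2, ω^2;
         1, 0, 0, ω, 0, 1, 1, 0, ω^2, ω^2, ω, ω, 0, ω^2, 1, 1, ω, 1, ω, 0;
         ω, 0, 0, 1, 0, ω, 0, 1, 0, ω^2, 1, 1, ω, ω^2, 1, ω, ω, 1, 0, ω^2]
    ∀ x : Fin 5 → F, Matrix.vecMul x M ≠ 0 →
      Even (univ.filter fun j => Matrix.vecMul x M j ≠ 0).card := by
  intro M x _hx
  -- characteristic 2
  have h4 : ((4 : ℕ) : F) = 0 := by rw [← hF]; exact FiniteField.cast_card_eq_zero F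
  have h2 : (2 : F) = 0 := by
    have : (2 : F) ^ 2 = 0 := by push_cast at h4; linear_combination h4
    exact pow_eq_zero_iff (n := 2) (by norm_num) |>.mp this
  -- the key polynomial identity
  have hentry : ∀ j : Fin 20, Matrix.vecMul x M j =
      x 0 * M 0 j + x 1 * M 1 j + x 2 * M 2 j + x 3 * M 3 j + x 4 * M 4 j := by
    intro j
    simp [Matrix.vecMul, dotProduct, Fin.sum_univ_five]
  have key : ∑ j : Fin 20, (Matrix.vecMul x M j) ^ 3 = 0 := by
    rw [Finset.sum_congr rfl fun j _ => by rw [hentry j]]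
    simp only [M, Fin.sum_univ_succ, Fin.sum_univ_zero,
      Matrix.cons_val', Matrix.cons_val_zero, Matrix.cons_val_one, Matrix.head_cons,
      Matrix.cons_val_two, Matrix.cons_val_three, Matrix.cons_val_four, Matrix.tail_cons,
      Matrix.empty_val', Matrix.cons_val_fin_one, Matrix.head_fin_const, Matrix.cons_val_succ,
      Fin.succ_zero_eq_one, Matrix.of_apply, Matrix.head_val']
    linear_combination ((20)*x 4^3 + (14)*x 4^3*ω + (6)*x 4^3*ω^2 + (3)*x 4^3*ω^3 + (3)*x 4^3*ω^4 + (42)*x 3*x 4^2 + (21)*x 3*x 4^2*ω + (12)*x 3*x 4^2*ω^2 + (6)*x 3*x 4^2*ω^3 + (6)*x 3*x 4^2*ω^4 + (42)*x 3^2*x 4 + (21)*x 3^2*x 4*ω + (12)*x 3^2*x 4*ω^2 + (6)*x 3^2*x 4*ω^3 + (6)*x 3^2*x 4*ω^4 + (20)*x 3^3 + (14)*x 3^3*ω + (6)*x 3^3*ω^2 + (3)*x 3^3*ω^3 + (3)*x 3^3*ω^4 + (48)*x 2*x 4^2 + (21)*x 2*x 4^2*ω + (18)*x 2*x 4^2*ω^2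 + (3)*x 2*x 4^2*ω^3 + (3)*x 2*x 4^2*ω^4 + (48)*x 2*x 3*x 4 + (24)*x 2*x 3*x 4*ω + (12)*x 2*x 3*x 4*ω^2 + (42)*x 2*x 3^2 + (18)*x 2*x 3^2*ω + (12)*x 2*x 3^2*ω^2 + (3)*x 2*x 3^2*ω^3 + (42)*x 2^2*x 4 + (21)*x 2^2*x 4*ω + (12)*x 2^2*x 4*ω^2 + (9)*x 2^2*x 4*ω^3 + (3)*x 2^2*x 4*ω^4 + (36)*x 2^2*x 3 + (18)*x 2^2*x 3*ω + (12)*x 2^2*x 3*ω^2 + (3)*x 2^2*x 3*ω^3 + (22)*x 2^3 + (14)*x 2^3*ω + (8)*x 2^3*ω^2 + (4)*x 2^3*ω^3 + (4)*x 2^3*ω^4 + (33)*x 1*x 4^2 + (15)*x 1*x 4^2*ω + (9)*x 1*x 4^2*ω^2 + (3)*x 1*x 4^2*ω^3 + (3)*x 1*x 4^2*ω^4 + (24)*x 1*x 3*x 4 + (12)*x 1*x 3*x 4*ω + (6)*x 1*x 3*x 4*ω^2 + (30)*x 1*x 3^2 + (12)*x 1*x 3^2*ω + (6)*x 1*x 3^2*ω^2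 + (3)*x 1*x 3^2*ω^3 + (48)*x 1*x 2*x 4 + (24)*x 1*x 2*x 4*ω + (12)*x 1*x 2*x 4*ω^2 + (6)*x 1*x 2*x 4*ω^3 + (6)*x 1*x 2*x 4*ω^4 + (42)*x 1*x 2*x 3 + (12)*x 1*x 2*x 3*ω + (6)*x 1*x 2*x 3*ω^2 + (33)*x 1*x 2^2 + (18)*x 1*x 2^2*ω + (12)*x 1*x 2^2*ω^2 + (3)*x 1*x 2^2*ω^3 + (3)*x 1*x 2^2*ω^4 + (27)*x 1^2*x 4 + (15)*x 1^2*x 4*ω + (9)*x 1^2*x 4*ω^2 + (3)*x 1^2*x 4*ω^3 + (3)*x 1^2*x 4*ω^4 + (18)*x 1^2*x 3 + (9)*x 1^2*x 3*ω + (6)*x 1^2*x 3*ω^2 + (27)*x 1^2*x 2 + (12)*x 1^2*x 2*ω + (6)*x 1^2*x 2*ω^2 + (3)*x 1^2*x 2*ω^3 + (3)*x 1^2*x 2*ω^4 + (12)*x 1^3 + (8)*x 1^3*ω + (4)*x 1^3*ω^2 + (2)*x 1^3*ω^3 + (2)*x 1^3*ω^4 + (18)*x 0*x 4^2 + (6)*x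 0*x 4^2*ω + (6)*x 0*x 4^2*ω^2 + (18)*x 0*x 3*x 4 + (6)*x 0*x 3*x 4*ω + (6)*x 0*x 3*x 4*ω^2 + (18)*x 0*x 3^2 + (6)*x 0*x 3^2*ω + (6)*x 0*x 3^2*ω^2 + (24)*x 0*x 2*x 4 + (12)*x 0*x 2*x 4*ω + (6)*x 0*x 2*x 4*ω^2 + (24)*x 0*x 2*x 3 + (6)*x 0*x 2*x 3*ω + (18)*x 0*x 2^2 + (6)*x 0*x 2^2*ω + (6)*x 0*x 2^2*ω^2 + (30)*x 0*x 1*x 4 + (6)*x 0*x 1*x 4*ω + (6)*x 0*x 1*x 4*ω^2 + (24)*x 0*x 1*x 3 + (6)*x 0*x 1*x 3*ω + (18)*x 0*x 1*x 2 + (6)*x 0*x 1*x 2*ω + (6)*x 0*x 1*x 2*ω^2 + (18)*x 0*x 1^2 + (6)*x 0*x 1^2*ω + (6)*x 0*x 1^2*ω^2 + (6)*x 0^2*x 4 + (6)*x 0^2*x 3 + (6)*x 0^2*x 2 + (6)*x 0^2*x 1) * hω + ((13)*x 4^3 + (17)*x 4^3*ω + (24)*x 3*x 4^2 + (36)*x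 3*x 4^2*ω + (24)*x 3^2*x 4 + (36)*x 3^2*x 4*ω + (13)*x 3^3 + (17)*x 3^3*ω + (27)*x 2*x 4^2 + (36)*x 2*x 4^2*ω + (27)*x 2*x 3*x 4 + (42)*x 2*x 3*x 4*ω + (24)*x 2*x 3^2 + (30)*x 2*x 3^2*ω + (24)*x 2^2*x 4 + (36)*x 2^2*x 4*ω + (21)*x 2^2*x 3 + (30)*x 2^2*x 3*ω + (15)*x 2^3 + (18)*x 2^3*ω + (21)*x 1*x 4^2 + (24)*x 1*x 4^2*ω + (15)*x 1*x 3*x 4 + (27)*x 1*x 3*x 4*ω + (18)*x 1*x 3^2 + (21)*x 1*x 3^2*ω + (27)*x 1*x 2*x 4 + (42)*x 1*x 2*x 4*ω + (24)*x 1*x 2*x 3 + (27)*x 1*x 2*x 3*ω + (21)*x 1*x 2^2 + (27)*x 1*x 2^2*ω + (18)*x 1^2*x 4 + (24)*x 1^2*x 4*ω + (12)*x 1^2*x 3 + (18)*x 1^2*x 3*ω + (18)*x 1^2*x 2 + (21)*x 1^2*x 2*ω + (10)*x 1^3 + (10)*x 1^3*ω + (12)*x 0*x 4^2 + (12)*x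 0*x 4^2*ω + (12)*x 0*x 3*x 4 + (18)*x 0*x 3*x 4*ω + (12)*x 0*x 3^2 + (12)*x 0*x 3^2*ω + (12)*x 0*x 2*x 4 + (24)*x 0*x 2*x 4*ω + (12)*x 0*x 2*x 3 + (18)*x 0*x 2*x 3*ω + (12)*x 0*x 2^2 + (12)*x 0*x 2^2*ω + (18)*x 0*x 1*x 4 + (18)*x 0*x 1*x 4*ω + (12)*x 0*x 1*x 3 + (18)*x 0*x 1*x 3*ω + (12)*x 0*x 1*x 2 + (18)*x 0*x 1*x 2*ω + (12)*x 0*x 1^2 + (12)*x 0*x 1^2*ω + (6)*x 0^2*x 4 + (6)*x 0^2*x 4*ω + (6)*x 0^2*x 3 + (6)*x 0^2*x 3*ω + (6)*x 0^2*x 2 + (6)*x 0^2*x 2*ω + (6)*x 0^2*x 1 + (6)*x 0^2*x 1*ω + (4)*x 0^3) * h2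
  -- each nonzero entry cubes to 1
  have hcube : ∀ j : Fin 20, Matrix.vecMul x M j ≠ 0 → (Matrix.vecMul x M j) ^ 3 = 1 := by
    intro j hj
    have := FiniteField.pow_card_sub_one_eq_one (Matrix.vecMul x M j) hj
    rwa [hF] at this
  set s : Finset (Fin 20) := univ.filter fun j => Matrix.vecMul x M j ≠ 0 with hs
  have hsum : ∑ j : Fin 20, (Matrix.vecMul x M j) ^ 3 = (s.card : F) := by
    rw [hs, ← Finset.sum_filter_of_ne (p := fun j => Matrix.vecMul x M j ≠ 0)
      (by intro j _ h hzero; exact h (by rw [hzero]; ring))]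
    rw [Finset.sum_congr rfl (fun j hj => hcube j (Finset.mem_filter.mp hj).2)]
    simp
  have hcard : ((s.card : ℕ) : F) = 0 := by rw [← hsum, key]
  rcases Nat.even_or_odd s.card with he | ho
  · exact he
  · exfalso
    obtain ⟨k, hk⟩ := ho
    rw [hk] at hcard
    push_cast at hcard
    have h1 : (1 : F) = 0 := by linear_combination hcard - (k : F) * h2
    exact one_ne_zero h1
end

section
/- A cap of size n in PG(4,4) whose point set meets every hyperplane in a number of points of the same parity as n exists only if the corresponding [n,5] code's dual construction yields a pure quantum [[n,n-10,4]] code; in particular, such a cap of size n corresponds to an [n,5]_4 linear code of strength 3 (every 3 columns linearly independent) which is Hermitian self-orthogonal. -/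
open Finset
open scoped Classical

lemma stmt15_aux (F : Type*) [Field F] (h2 : (2:F) = 0) (ω : F) (hω3 : ω^3 = 1)
    (hω : ω + ω^2 ≠ 0) (n : ℕ) (c d : Fin n → F)
    (hc : ∑ j, c j ^ 3 = 0) (hd : ∑ j, d j ^ 3 = 0)
    (h3 : ∑ j, (c j + d j) ^ 3 = 0) (h4 : ∑ j, (c j + ω * d j) ^ 3 = 0) :
    ∑ j, c j * d j ^ 2 = 0 := by
  have e1 : ∀ u v : F, (u + v)^3 = u^3 + u^2*v + u*v^2 + v^3 := fun u v => by
    linear_combination (u^2*v + u*v^2) * h2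
  have e2 : ∀ u v : F, (u + ω*v)^3 = u^3 + ω*(u^2*v) + ω^2*(u*v^2) + v^3 := fun u v => by
    linear_combination (ω*u^2*v + ω^2*u*v^2) * h2 + v^3 * hω3
  simp only [e1] at h3
  simp only [e2] at h4
  rw [Finset.sum_add_distrib, Finset.sum_add_distrib, Finset.sum_add_distrib, hc, hd] at h3
  rw [Finset.sum_add_distrib, Finset.sum_add_distrib, Finset.sum_add_distrib, hc, hd,
    ← Finset.mul_sum, ← Finset.mul_sum] at h4
  set S1 := ∑ j, c j ^ 2 * d j with hS1
  set S2 := ∑ j, c j * d j ^ 2 with hS2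
  have h5 : (ω^2 - ω) * S2 = 0 := by linear_combination h4 - ω * h3
  have h6 : ω^2 - ω ≠ 0 := by
    intro h
    apply hω
    linear_combination h + ω * h2
  exact (mul_eq_zero.mp h5).resolve_left h6

/-- If `n` points of `PG(4,4)` form a cap meeting every hyperplane in a number of points
of the same parity as `n` (a quantum cap), then the corresponding `[n,5]₄` code has
strength 3 (any three distinct columns are linearly independent) and is self-orthogonal
with respect to the Hermitian form `⟨x,y⟩ = Σ xᵢ yᵢ²`. -/
theorem stmt15 (F : Type*) [Field F] [Fintype F] (hF : Fintype.card F = 4)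
    (n : ℕ) (P : Fin n → (Fin 5 → F))
    (hP0 : ∀ j, P j ≠ 0)
    (hcap : ∀ j₁ j₂ j₃ : Fin n, j₁ ≠ j₂ → j₁ ≠ j₃ → j₂ ≠ j₃ →
      LinearIndependent F ![P j₁, P j₂, P j₃])
    (hparity : ∀ x : Fin 5 → F, x ≠ 0 →
      (univ.filter fun j => ∑ i, x i * P j i = 0).card % 2 = n % 2) :
    (∀ j₁ j₂ j₃ : Fin n, j₁ ≠ j₂ → j₁ ≠ j₃ → j₂ ≠ j₃ →
      LinearIndependent F ![P j₁, P j₂, P j₃]) ∧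
    (∀ a b : Fin 5 → F,
      ∑ j, (∑ i, a i * P j i) * (∑ i, b i * P j i) ^ 2 = 0) := by
  -- characteristic 2
  haveI : CharP F (ringChar F) := ringChar.charP F
  have hp2 : (2 : F) = 0 := by
    obtain ⟨k, hprime, hk⟩ := FiniteField.card F (ringChar F)
    have hdvd : ringChar F ∣ 4 := by
      rw [← hF, hk]
      exact dvd_pow_self _ (by positivity)
    have h2' : ringChar F ∣ 2 := hprime.dvd_of_dvd_pow (show ringChar F ∣ 2^2 by norm_num [hdvd])
    have : ringChar F = 2 := (Nat.prime_dvd_prime_iff_eq hprime Nat.prime_two).mp h2'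
    calc (2 : F) = ((2 : ℕ) : F) := by norm_num
    _ = 0 := by rw [← this]; exact CharP.cast_eq_zero F _
  -- every codeword has Σ c^3 = 0
  have key : ∀ x : Fin 5 → F, ∑ j, (∑ i, x i * P j i) ^ 3 = 0 := by
    intro x
    by_cases hx : x = 0
    · simp [hx]
    · have hpar := hparity x hx
      rw [← Finset.sum_filter_add_sum_filter_not univ (fun j => ∑ i, x i * P j i = 0)]
      have hA : ∑ j ∈ univ.filter (fun j => ∑ i, x i * P j i = 0),
          (∑ i, x i * P j i) ^ 3 = 0 := by
        apply Finset.sum_eq_zero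
        intro j hj
        simp only [mem_filter] at hj
        rw [hj.2]
        ring
      have hB : ∑ j ∈ univ.filter (fun j => ¬ (∑ i, x i * P j i = 0)),
          (∑ i, x i * P j i) ^ 3
          = ((univ.filter fun j => ¬ (∑ i, x i * P j i = 0)).card : F) := by
        rw [Finset.sum_congr rfl (fun j hj => ?_)]
        · rw [Finset.sum_const, nsmul_eq_mul, mul_one]
        · simp only [mem_filter] at hj
          have := FiniteField.pow_card_sub_one_eq_one _ hj.2
          rwa [hF] at this
      rw [hA, hB, zero_add]
      have hcard : (univ.filter fun j => ∑ i, x i * P j i = 0).card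
          + (univ.filter fun j => ¬ (∑ i, x i * P j i = 0)).card = n := by
        rw [Finset.card_filter_add_card_filter_not, Finset.card_univ, Fintype.card_fin]
      have heven : (univ.filter fun j => ¬ (∑ i, x i * P j i = 0)).card % 2 = 0 := by omega
      obtain ⟨m, hm⟩ := Nat.even_iff.mpr heven
      rw [hm]
      push_cast
      linear_combination (m : F) * hp2
  refine ⟨hcap, ?_⟩
  intro a b
  -- pick ω ≠ 0, 1
  obtain ⟨ω, hω0, hω1⟩ : ∃ ω : F, ω ≠ 0 ∧ ω ≠ 1 := by
    by_contra h
    push_neg at h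
    have hsub : (univ : Finset F) ⊆ {0, 1} := by
      intro y _
      rcases eq_or_ne y 0 with h0 | h0
      · simp [h0]
      · simp [h y h0]
    have hle := Finset.card_le_card hsub
    have h01 : ({0, 1} : Finset F).card ≤ 2 := by
      apply le_trans (Finset.card_insert_le _ _)
      simp
    rw [Finset.card_univ, hF] at hle
    omega
  have hω3 : ω ^ 3 = 1 := by
    have := FiniteField.pow_card_sub_one_eq_one ω hω0
    rwa [hF] at this
  have hω : ω + ω ^ 2 ≠ 0 := by
    intro h
    have hmul : ω * (1 + ω) = 0 := by linear_combination h
    rcases mul_eq_zero.mp hmul with h' | h'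
    · exact hω0 h'
    · exact hω1 (by linear_combination h' - hp2)
  have ha := key a
  have hb := key b
  have hab := key (a + b)
  have habw := key (a + ω • b)
  simp only [Pi.add_apply, add_mul, Finset.sum_add_distrib] at hab
  simp only [Pi.add_apply, Pi.smul_apply, smul_eq_mul, add_mul, mul_assoc,
    Finset.sum_add_distrib, ← Finset.mul_sum] at habw
  exact stmt15_aux F hp2 ω hω3 hω n (fun j => ∑ i, a i * P j i)
    (fun j => ∑ i, b i * P j i) ha hb hab habw
end

section
/- In GF(2)^{2m} with the symplectic form Φ(u,v)=Σ(x_{1,i}y_{2,i}+y_{1,i}x_{2,i}), identify GF(4)^m with GF(2)^{2m} via z_i = x_i + ωy_i. Then two vectors u, v ∈ GF(4)^m satisfy Tr(⟨u, v̄⟩) determined by Φ: specifically, for the images ũ, ṽ of u, v, Φ(ũ,ṽ) equals the trace from GF(4) to GF(2) of the Hermitian product Σ u_i v_i². Consequently, a GF(4)-linear code that is Hermitian self-orthogonal is symplectically self-orthogonal as a GF(2)-code. -/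
open Finset

private lemma aux16 {F : Type*} [CommRing F] (ω a b c d : F)
    (ha : a ^ 2 = a) (hb : b ^ 2 = b) (hc : c ^ 2 = c) (hd : d ^ 2 = d)
    (hω : ω ^ 2 = ω + 1) (h2 : (2 : F) = 0) :
    (a + ω * b) * (c + ω * d) ^ 2 + ((a + ω * b) * (c + ω * d) ^ 2) ^ 2 = a * d + b * c := by
  linear_combination ((2*d^4) + (3*d^4*ω) + (4*c*d^3) + (8*c*d^3*ω) + (6*c^2*d^2) + (6*c^2*d^2*ω) + (4*c^3*d*ω) + (1*c^4))*ha + ((5*d^4) + (8*d^4*ω) + (12*c*d^3) + (20*c*d^3*ω) + (12*c^2*d^2) + (18*c^2*d^2*ω) + (4*c^3*d) + (8*c^3*d*ω) + (1*c^4) + (1*c^4*ω))*hb + ((1*b) + (2*b*ω) + (4*b*d) + (8*b*d*ω) + (12*b*d^2) + (18*b*d^2*ω) + (1*b*c) + (1*b*c*ω) + (4*b*c*d) + (8*b*c*d*ω) + (1*b*c^2) + (1*b*c^2*ω) + (2*a) + (4*a*d*ω) + (6*a*d^2) + (6*a*d^2*ω) + (1*a*c) + (4*a*c*d*ω) + (1*a*c^2)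 + (2*a*b*ω) + (8*a*b*d) + (8*a*b*d*ω) + (12*a*b*d^2) + (24*a*b*d^2*ω) + (2*a*b*c*ω) + (8*a*b*c*d) + (8*a*b*c*d*ω) + (2*a*b*c^2*ω))*hc + ((6*b) + (10*b*ω) + (5*b*d) + (8*b*d*ω) + (5*b*d^2) + (8*b*d^2*ω) + (24*b*c) + (38*b*c*ω) + (12*b*c*d) + (20*b*c*d*ω) + (3*a) + (4*a*ω) + (2*a*d) + (3*a*d*ω) + (2*a*d^2) + (3*a*d^2*ω) + (10*a*c) + (14*a*c*ω) + (4*a*c*d) + (8*a*c*d*ω) + (6*a*b) + (10*a*b*ω) + (6*a*b*d) + (10*a*b*d*ω) + (6*a*b*d^2) + (10*a*b*d^2*ω) + (28*a*b*c) + (48*a*b*c*ω) + (16*a*b*c*d) + (24*a*b*c*d*ω))*hd + ((1*b*d^2) + (1*b*d^2*ω) + (2*b*c*d) + (5*b^2*d^4) + (3*b^2*d^4*ω) + (2*b^2*d^4*ω^2) + (1*b^2*d^4*ω^3) + (1*b^2*d^4*ω^4) + (12*b^2*c*d^3) + (8*b^2*c*d^3*ω) + (4*b^2*c*d^3*ω^2)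 + (4*b^2*c*d^3*ω^3) + (12*b^2*c^2*d^2) + (6*b^2*c^2*d^2*ω) + (6*b^2*c^2*d^2*ω^2) + (4*b^2*c^3*d) + (4*b^2*c^3*d*ω) + (1*b^2*c^4) + (1*a*d^2) + (6*a*b*d^4) + (4*a*b*d^4*ω) + (2*a*b*d^4*ω^2) + (2*a*b*d^4*ω^3) + (16*a*b*c*d^3) + (8*a*b*c*d^3*ω) + (8*a*b*c*d^3*ω^2) + (12*a*b*c^2*d^2) + (12*a*b*c^2*d^2*ω) + (8*a*b*c^3*d) + (2*a^2*d^4) + (1*a^2*d^4*ω) + (1*a^2*d^4*ω^2) + (4*a^2*c*d^3) + (4*a^2*c*d^3*ω) + (6*a^2*c^2*d^2))*hω + ((3*b*d) + (5*b*d*ω) + (1*b*c*ω) + (15*b*c*d) + (24*b*c*d*ω) + (1*a*d) + (2*a*d*ω) + (1*a*c) + (5*a*c*d) + (10*a*c*d*ω) + (3*a*b*d) + (5*a*b*d*ω) + (1*a*b*c*ω) + (18*a*b*c*d) + (28*a*b*c*d*ω))*h2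

/-- Under the identification `GF(4)^m ≅ GF(2)^{2m}`, `zᵢ = xᵢ + ωyᵢ ↦ (xᵢ,yᵢ)`, the
symplectic form of the images of `u, v` equals the trace `t ↦ t + t²` from `GF(4)` to
`GF(2)` of the Hermitian product `Σ uᵢ vᵢ²`. Consequently a Hermitian-orthogonal pair is
symplectically orthogonal (so a Hermitian self-orthogonal GF(4)-linear code is
symplectically self-orthogonal as a GF(2)-code). -/
theorem stmt16 (F : Type*) [Field F] [Fintype F] [CharP F 2]
    (hF : Fintype.card F = 4) (ω : F) (hω : ω ^ 2 = ω + 1) (m : ℕ)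
    (u v : Fin m → F) (x y x' y' : Fin m → ZMod 2)
    (hu : ∀ i, u i = ZMod.castHom (dvd_refl 2) F (x i) + ω * ZMod.castHom (dvd_refl 2) F (y i))
    (hv : ∀ i, v i = ZMod.castHom (dvd_refl 2) F (x' i) + ω * ZMod.castHom (dvd_refl 2) F (y' i)) :
    (ZMod.castHom (dvd_refl 2) F (∑ i, (x i * y' i + y i * x' i)) =
      (∑ i, u i * (v i) ^ 2) + (∑ i, u i * (v i) ^ 2) ^ 2) ∧
    ((∑ i, u i * (v i) ^ 2 = 0) → ∑ i, (x i * y' i + y i * x' i) = 0) := by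

  set φ := ZMod.castHom (dvd_refl 2) F with hφ
  have h2 : (2 : F) = 0 := by
    have := CharP.cast_eq_zero F 2
    exact_mod_cast this
  have hsq : ∀ z : ZMod 2, (φ z) ^ 2 = φ z := by
    intro z
    rw [← map_pow, (by decide : ∀ w : ZMod 2, w ^ 2 = w) z]
  haveI : ExpChar F 2 := ExpChar.prime (by norm_num)
  have key : φ (∑ i, (x i * y' i + y i * x' i)) =
      (∑ i, u i * (v i) ^ 2) + (∑ i, u i * (v i) ^ 2) ^ 2 := by
    rw [sum_pow_char, map_sum, ← Finset.sum_add_distrib]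
    refine Finset.sum_congr rfl fun i _ => ?_
    rw [hu i, hv i, map_add, map_mul, map_mul]
    exact (aux16 ω (φ (x i)) (φ (y i)) (φ (x' i)) (φ (y' i))
      (hsq _) (hsq _) (hsq _) (hsq _) hω h2).symm
  refine ⟨key, fun hS => ?_⟩
  rw [hS] at key
  simp only [ne_eq, OfNat.ofNat_ne_zero, not_false_eq_true, zero_pow, add_zero] at key
  exact φ.injective (by simpa using key)
end

section
/- Let n lines L_1,…,L_n in PG(m-1,2) be given by pairs of points (P_k, Q_k), and form the (row-indexed) binary code C ⊆ GF(2)^{2n} generated by the m rows ((P_k)_i, (Q_k)_i)_{k=1..n}, i = 1..m. Then C is self-orthogonal with respect to the symplectic form Φ(u,v)=Σ_k(u_{2k-1}v_{2k}+u_{2k}v_{2k-1}) if and only if for every codimension-2 subspace S of PG(m-1,2), the number of lines L_k skew to S (i.e., L_k ∩ S = ∅) is even. -/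
open Finset
open scoped Classical

namespace Stmt18Aux

/-- The linear map sending `x` to the linear functional `v ↦ ∑ i, x i * v i`. -/
noncomputable def B (m : ℕ) :
    (Fin m → ZMod 2) →ₗ[ZMod 2] Module.Dual (ZMod 2) (Fin m → ZMod 2) :=
  LinearMap.mk₂ (ZMod 2) (fun x v => ∑ i, x i * v i)
    (fun x x' v => by simp [add_mul, Finset.sum_add_distrib])
    (fun c x v => by simp [Finset.mul_sum, mul_assoc])
    (fun x v v' => by simp [mul_add, Finset.sum_add_distrib])
    (fun c x v => by
      simp only [Pi.smul_apply, smul_eq_mul, Finset.mul_sum]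
      exact Finset.sum_congr rfl fun i _ => by ring)

lemma B_apply {m : ℕ} (x v : Fin m → ZMod 2) : B m x v = ∑ i, x i * v i := rfl

lemma B_single {m : ℕ} (x : Fin m → ZMod 2) (j : Fin m) :
    B m x (Pi.single j 1) = x j := by
  rw [B_apply]
  simp [Pi.single_apply, mul_ite]

lemma B_injective {m : ℕ} : Function.Injective (B m) := by
  intro x y h
  funext j
  have := congrArg (fun f => f (Pi.single j (1 : ZMod 2))) h
  simpa only [B_single] using this

/-- Any linear functional on `Fin m → ZMod 2` has the form `B m x`. -/
lemma dual_eq_B {m : ℕ} (φ : Module.Dual (ZMod 2) (Fin m → ZMod 2)) (v : Fin m → ZMod 2) :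
    φ v = B m (fun i => φ (Pi.single i 1)) v := by
  rw [B_apply, LinearMap.pi_apply_eq_sum_univ φ v]
  refine Finset.sum_congr rfl fun i _ => ?_
  have h1 : (fun j => if i = j then (1 : ZMod 2) else 0) = Pi.single i 1 := by
    funext j
    rw [Pi.single_apply]
    exact if_congr eq_comm rfl rfl
  rw [h1, smul_eq_mul, mul_comm]

/-- Key pointwise identity over `GF(2)`. -/
lemma point_identity : ∀ a b c d : ZMod 2,
    a * d + c * b =
      (if ¬(a = 0 ∧ b = 0) ∧ ¬(c = 0 ∧ d = 0) ∧ ¬(a + c = 0 ∧ b + d = 0) then 1 else 0) := by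
  decide

/-- The core counting identity: the symplectic sum equals (mod 2) the number of
skew lines, for any subspace cut out by the two functionals. -/
lemma core {m n : ℕ} (x y : Fin m → ZMod 2) (P Q : Fin n → (Fin m → ZMod 2))
    (S : Submodule (ZMod 2) (Fin m → ZMod 2))
    (hS : ∀ v, v ∈ S ↔ (B m x v = 0 ∧ B m y v = 0)) :
    ∑ k, ((∑ i, x i * P k i) * (∑ i, y i * Q k i) +
          (∑ i, x i * Q k i) * (∑ i, y i * P k i)) =
      (((univ.filter fun k => P k ∉ S ∧ Q k ∉ S ∧ P k + Q k ∉ S)).card : ZMod 2) := by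
  rw [← Finset.sum_boole]
  refine Finset.sum_congr rfl fun k _ => ?_
  rw [show (∑ i, x i * P k i) = B m x (P k) from rfl,
      show (∑ i, y i * Q k i) = B m y (Q k) from rfl,
      show (∑ i, x i * Q k i) = B m x (Q k) from rfl,
      show (∑ i, y i * P k i) = B m y (P k) from rfl,
      point_identity (B m x (P k)) (B m y (P k)) (B m x (Q k)) (B m y (Q k))]
  refine if_congr ?_ rfl rfl
  simp only [hS, map_add]

lemma natCast_zmod_two_eq_zero_iff_even (c : ℕ) : ((c : ZMod 2) = 0) ↔ Even c := by
  rw [ZMod.natCast_eq_zero_iff]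
  exact even_iff_two_dvd.symm

/-- Every subspace of `finrank = m - 2` is the joint kernel of two functionals. -/
lemma repr_exists {m : ℕ} (S : Submodule (ZMod 2) (Fin m → ZMod 2))
    (hS : Module.finrank (ZMod 2) S = m - 2) :
    ∃ x y : Fin m → ZMod 2, ∀ v, v ∈ S ↔ (B m x v = 0 ∧ B m y v = 0) := by
  set W := S.dualAnnihilator with hW
  have hfin : Module.finrank (ZMod 2) W ≤ 2 := by
    have h1 : Module.finrank (ZMod 2) W
        = Module.finrank (ZMod 2) ((Fin m → ZMod 2) ⧸ S) :=
      ((Subspace.quotEquivAnnihilator S).finrank_eq).symm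
    have h2 := Submodule.finrank_quotient_add_finrank S
    have h3 : Module.finrank (ZMod 2) (Fin m → ZMod 2) = m := by
      simp [Module.finrank_pi]
    omega
  set d := Module.finrank (ZMod 2) W with hd
  have b : Module.Basis (Fin d) (ZMod 2) W := Module.finBasis (ZMod 2) W
  set f : Module.Dual (ZMod 2) (Fin m → ZMod 2) :=
    (if h : 0 < d then ((b ⟨0, h⟩ : W) : Module.Dual (ZMod 2) (Fin m → ZMod 2)) else 0) with hf
  set g : Module.Dual (ZMod 2) (Fin m → ZMod 2) :=
    (if h : 1 < d then ((b ⟨1, h⟩ : W) : Module.Dual (ZMod 2) (Fin m → ZMod 2)) else 0) with hg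
  have key : ∀ v, (∀ φ ∈ W, φ v = 0) ↔ (f v = 0 ∧ g v = 0) := by
    intro v
    constructor
    · intro h
      constructor
      · rw [hf]; split
        · exact h _ (b _).2
        · rfl
      · rw [hg]; split
        · exact h _ (b _).2
        · rfl
    · rintro ⟨h1, h2⟩ φ hφ
      have hb : ∀ i : Fin d, ((b i : W) : Module.Dual (ZMod 2) (Fin m → ZMod 2)) v = 0 := by
        intro i
        have hi : (i : ℕ) = 0 ∨ (i : ℕ) = 1 := by omega
        rcases hi with hi | hi
        · have h0 : 0 < d := by omega
          have : i = ⟨0, h0⟩ := Fin.ext hi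
          rw [this]
          have : f = ((b ⟨0, h0⟩ : W) : Module.Dual (ZMod 2) (Fin m → ZMod 2)) := by
            rw [hf, dif_pos h0]
          rw [← this]; exact h1
        · have h0 : 1 < d := by omega
          have : i = ⟨1, h0⟩ := Fin.ext hi
          rw [this]
          have : g = ((b ⟨1, h0⟩ : W) : Module.Dual (ZMod 2) (Fin m → ZMod 2)) := by
            rw [hg, dif_pos h0]
          rw [← this]; exact h2
      have hrepr := b.sum_repr ⟨φ, hφ⟩
      have : φ = ∑ i, (b.repr ⟨φ, hφ⟩) i • ((b i : W) : Module.Dual (ZMod 2) (Fin m → ZMod 2)) := by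
        have := congrArg (Subtype.val) hrepr
        simpa only [Submodule.coe_sum, Submodule.coe_smul] using this.symm
      calc φ v = (∑ i, (b.repr ⟨φ, hφ⟩) i •
              ((b i : W) : Module.Dual (ZMod 2) (Fin m → ZMod 2))) v := by rw [← this]
        _ = 0 := by
          rw [LinearMap.sum_apply]
          refine Finset.sum_eq_zero fun i _ => ?_
          rw [LinearMap.smul_apply, hb i, smul_zero]
  refine ⟨fun i => f (Pi.single i 1), fun i => g (Pi.single i 1), fun v => ?_⟩
  rw [← dual_eq_B f v, ← dual_eq_B g v, ← key v]
  exact (Subspace.forall_mem_dualAnnihilator_apply_eq_zero_iff S v).symm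

end Stmt18Aux

open Stmt18Aux

/-- Let `n` lines of `PG(m-1,2)` be given by pairs of distinct points `(Pₖ, Qₖ)`, and let
`C ⊆ GF(2)^{2n}` be the binary code generated by the `m` interleaved rows
`((Pₖ)ᵢ, (Qₖ)ᵢ)ₖ`. Then `C` is self-orthogonal for the symplectic form iff for every
codimension-2 subspace (secundum) `S` of `PG(m-1,2)` the number of lines skew to `S`
is even. (Codewords correspond to coefficient vectors `x`.) -/
theorem stmt18 (m n : ℕ) (P Q : Fin n → (Fin m → ZMod 2))
    (hP : ∀ k, P k ≠ 0) (hQ : ∀ k, Q k ≠ 0) (hPQ : ∀ k, P k ≠ Q k) :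
    (∀ x y : Fin m → ZMod 2,
      ∑ k, ((∑ i, x i * P k i) * (∑ i, y i * Q k i) +
            (∑ i, x i * Q k i) * (∑ i, y i * P k i)) = 0) ↔
    (∀ S : Submodule (ZMod 2) (Fin m → ZMod 2), Module.finrank (ZMod 2) S = m - 2 →
      Even ((univ.filter fun k => P k ∉ S ∧ Q k ∉ S ∧ P k + Q k ∉ S)).card) := by
  constructor
  · intro h S hS
    obtain ⟨x, y, hchar⟩ := repr_exists S hS
    have hc := core x y P Q S hchar
    rw [h x y] at hc
    exact (natCast_zmod_two_eq_zero_iff_even _).mp hc.symm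
  · intro h x y
    by_cases hx : x = 0
    · subst hx; simp
    by_cases hy : y = 0
    · subst hy; simp
    by_cases hxy : x = y
    · subst hxy
      refine Finset.sum_eq_zero fun k _ => ?_
      have : ∀ u w : ZMod 2, u * w + w * u = 0 := by decide
      exact this _ _
    -- main case : x, y linearly independent
    have li0 : LinearIndependent (ZMod 2) ![x, y] := by
      rw [linearIndependent_fin2]
      refine ⟨by simpa using hy, fun a => ?_⟩
      rcases (by decide : ∀ a : ZMod 2, a = 0 ∨ a = 1) a with rfl | rfl
      · simpa using fun h0 => hx h0.symm
      · simpa using fun h0 => hxy h0.symm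
    have li : LinearIndependent (ZMod 2) ![B m x, B m y] := by
      have := li0.map' (B m) (LinearMap.ker_eq_bot.mpr B_injective)
      have heq : (B m) ∘ ![x, y] = ![B m x, B m y] := by
        funext i; fin_cases i <;> rfl
      rwa [heq] at this
    set W : Submodule (ZMod 2) (Module.Dual (ZMod 2) (Fin m → ZMod 2)) :=
      Submodule.span (ZMod 2) (Set.range ![B m x, B m y]) with hWdef
    set S : Submodule (ZMod 2) (Fin m → ZMod 2) := W.dualCoannihilator with hSdef
    have hchar : ∀ v, v ∈ S ↔ (B m x v = 0 ∧ B m y v = 0) := by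
      intro v
      rw [hSdef, Submodule.mem_dualCoannihilator]
      constructor
      · intro hv
        exact ⟨hv _ (Submodule.subset_span ⟨0, rfl⟩),
               hv _ (Submodule.subset_span ⟨1, rfl⟩)⟩
      · rintro ⟨h1, h2⟩ φ hφ
        induction hφ using Submodule.span_induction with
        | mem φ hmem =>
          obtain ⟨i, rfl⟩ := hmem
          fin_cases i
          · exact h1
          · exact h2
        | zero => rfl
        | add φ ψ _ _ ih1 ih2 => rw [LinearMap.add_apply, ih1, ih2, add_zero]
        | smul c φ _ ih => rw [LinearMap.smul_apply, ih, smul_zero]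
    have hrk : Module.finrank (ZMod 2) S = m - 2 := by
      have h1 : Module.finrank (ZMod 2) W + Module.finrank (ZMod 2) S
          = Module.finrank (ZMod 2) (Fin m → ZMod 2) :=
        Subspace.finrank_add_finrank_dualCoannihilator_eq W
      have h2 : Module.finrank (ZMod 2) W = 2 := by
        rw [hWdef]
        simpa using finrank_span_eq_card li
      have h3 : Module.finrank (ZMod 2) (Fin m → ZMod 2) = m := by
        simp [Module.finrank_pi]
      omega
    have heven := h S hrk
    have hc := core x y P Q S hchar
    rw [hc]
    exact (natCast_zmod_two_eq_zero_iff_even _).mpr heven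
end
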